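/- In the sequential scheduling game on m unrelated machines where players are simple-minded, every simple-minded equilibrium σ has makespan at most m·OPT; in particular the sequential price of anarchy for simple-minded players is at most m. -/

import Mathlib

/-!
Sequential scheduling game on `m` unrelated machines with simple-minded players.
Machines are indexed by `Fin m`, jobs are `1, …, n`, and `p i j` is the processing
time of job `j` on machine `i`.
-/

/-- `mload p σ i ℓ`: load of machine `i` after the first `ℓ` jobs under schedule `σ`. -/
def mload {m : ℕ} (p : Fin m → ℕ → ℝ) (σ : ℕ → Fin m) (i : Fin m) (ℓ : ℕ) : ℝ :=
  ∑ j ∈ Finset.Icc 1 ℓ, if σ j = i then p i j else 0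

/-- `μ` is a selection assigning to each job `j ∈ {1, …, n}` a machine on which its
processing time is minimal (so that `p (μ j) j = p_j`). -/
def MinSel {m : ℕ} (n : ℕ) (p : Fin m → ℕ → ℝ) (μ : ℕ → Fin m) : Prop :=
  ∀ j, 1 ≤ j → j ≤ n → ∀ i, p (μ j) j ≤ p i j

/-- Anticipated cost, for a simple-minded job `j`, of choosing machine `i`:
the current load of machine `i`, plus `p i j`, plus the minimum processing times of
all later jobs that `j` assumes (via the selection `μ`) will choose machine `i`. -/
def smCost {m : ℕ} (n : ℕ) (p : Fin m → ℕ → ℝ) (μ σ : ℕ → Fin m) (j : ℕ) (i : Fin m) : ℝ :=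
  mload p σ i (j - 1) + p i j + ∑ j' ∈ Finset.Icc (j + 1) n, if μ j' = i then p (μ j') j' else 0

/-- `σ` is a simple-minded equilibrium: every job `j ∈ {1, …, n}` chooses a machine
minimizing its anticipated cost. -/
def SMEq {m : ℕ} (n : ℕ) (p : Fin m → ℕ → ℝ) (μ σ : ℕ → Fin m) : Prop :=
  ∀ j, 1 ≤ j → j ≤ n → ∀ i, smCost n p μ σ j (σ j) ≤ smCost n p μ σ j i

/-- Makespan of an arbitrary schedule `τ` of jobs `1, …, n` on `m` machines. -/
noncomputable def makespanM {m : ℕ} (n : ℕ) (p : Fin m → ℕ → ℝ) (τ : ℕ → Fin m) : ℝ :=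
  ⨆ i, mload p τ i n

/-- Optimal (minimum) makespan over all schedules of jobs `1, …, n`. -/
noncomputable def OPTm {m : ℕ} (n : ℕ) (p : Fin m → ℕ → ℝ) : ℝ :=
  sInf {x | ∃ τ : ℕ → Fin m, x = makespanM n p τ}

/-!
The potential `D_i(ℓ) + F_i(ℓ)`, where `F_i(ℓ)` is the load that `μ` anticipates on machine `i`
from the jobs after `ℓ`, starts below `S = ∑ⱼ p_j`, and its maximum over the machines never
increases: job `ℓ + 1` leaves its machine at exactly the anticipated cost of its choice, which by
the equilibrium condition is at most the anticipated cost of `μ (ℓ + 1)`, i.e. the previous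
potential of `μ (ℓ + 1)`, while the other machines only lose anticipated load. As `F_i(n) = 0`,
the makespan is at most `S`, and `S ≤ ∑ᵢ D_i^τ(n) ≤ m · makespan(τ)` for every schedule `τ`.
-/

open Finset

namespace SimpleMinded

variable {m n : ℕ} {p : Fin m → ℕ → ℝ} {μ σ τ : ℕ → Fin m}

def futureLoad (n : ℕ) (p : Fin m → ℕ → ℝ) (μ : ℕ → Fin m) (i : Fin m) (ℓ : ℕ) : ℝ :=
  ∑ j ∈ Icc (ℓ + 1) n, if μ j = i then p (μ j) j else 0

def sumMinTime (n : ℕ) (p : Fin m → ℕ → ℝ) (μ : ℕ → Fin m) : ℝ :=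
  ∑ j ∈ Icc 1 n, p (μ j) j

lemma mload_zero (i : Fin m) : mload p σ i 0 = 0 := by
  simp [mload]

lemma mload_succ (i : Fin m) (ℓ : ℕ) :
    mload p σ i (ℓ + 1) = mload p σ i ℓ + if σ (ℓ + 1) = i then p i (ℓ + 1) else 0 :=
  sum_Icc_succ_top (Nat.le_add_left 1 ℓ) _

lemma futureLoad_self (i : Fin m) : futureLoad n p μ i n = 0 := by
  simp [futureLoad]

lemma futureLoad_eq_add_futureLoad_succ {ℓ : ℕ} (hℓ : ℓ + 1 ≤ n) (i : Fin m) :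
    futureLoad n p μ i ℓ
      = (if μ (ℓ + 1) = i then p (μ (ℓ + 1)) (ℓ + 1) else 0) + futureLoad n p μ i (ℓ + 1) := by
  rw [futureLoad, ← insert_Icc_add_one_left_eq_Icc hℓ, sum_insert (by simp)]
  rfl

lemma smCost_succ (i : Fin m) (ℓ : ℕ) :
    smCost n p μ σ (ℓ + 1) i = mload p σ i ℓ + p i (ℓ + 1) + futureLoad n p μ i (ℓ + 1) :=
  rfl

section Nonneg

variable (hp : ∀ i j, 0 ≤ p i j)
include hp

lemma futureLoad_le_sumMinTime (i : Fin m) : futureLoad n p μ i 0 ≤ sumMinTime n p μ :=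
  sum_le_sum fun j _ => by split_ifs <;> simp [hp]

lemma futureLoad_succ_le {ℓ : ℕ} (hℓ : ℓ + 1 ≤ n) (i : Fin m) :
    futureLoad n p μ i (ℓ + 1) ≤ futureLoad n p μ i ℓ := by
  rw [futureLoad_eq_add_futureLoad_succ hℓ]
  split_ifs <;> simp [hp]

lemma exists_potential_succ_le (hσ : SMEq n p μ σ) {ℓ : ℕ} (hℓ : ℓ + 1 ≤ n) (i : Fin m) :
    ∃ k, mload p σ i (ℓ + 1) + futureLoad n p μ i (ℓ + 1)
      ≤ mload p σ k ℓ + futureLoad n p μ k ℓ := by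
  by_cases hi : σ (ℓ + 1) = i
  · subst hi
    refine ⟨μ (ℓ + 1), ?_⟩
    calc mload p σ (σ (ℓ + 1)) (ℓ + 1) + futureLoad n p μ (σ (ℓ + 1)) (ℓ + 1)
        = smCost n p μ σ (ℓ + 1) (σ (ℓ + 1)) := by rw [smCost_succ, mload_succ, if_pos rfl]
      _ ≤ smCost n p μ σ (ℓ + 1) (μ (ℓ + 1)) := hσ (ℓ + 1) (Nat.le_add_left 1 ℓ) hℓ _
      _ = mload p σ (μ (ℓ + 1)) ℓ + futureLoad n p μ (μ (ℓ + 1)) ℓ := by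
        rw [smCost_succ, futureLoad_eq_add_futureLoad_succ hℓ, if_pos rfl, add_assoc]
  · refine ⟨i, ?_⟩
    rw [mload_succ, if_neg hi, add_zero]
    exact add_le_add_right (futureLoad_succ_le hp hℓ i) _

lemma potential_le_sumMinTime (hσ : SMEq n p μ σ) {ℓ : ℕ} (hℓ : ℓ ≤ n) (i : Fin m) :
    mload p σ i ℓ + futureLoad n p μ i ℓ ≤ sumMinTime n p μ := by
  induction ℓ generalizing i with
  | zero => simpa [mload_zero] using futureLoad_le_sumMinTime hp i
  | succ ℓ ih =>
    obtain ⟨k, hk⟩ := exists_potential_succ_le hp hσ hℓ i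
    exact hk.trans (ih (by omega) k)

lemma makespanM_le_sumMinTime [Nonempty (Fin m)] (hσ : SMEq n p μ σ) :
    makespanM n p σ ≤ sumMinTime n p μ :=
  ciSup_le fun i => by
    simpa [futureLoad_self] using potential_le_sumMinTime hp hσ le_rfl i

end Nonneg

lemma sumMinTime_le_sum (hμ : MinSel n p μ) (τ : ℕ → Fin m) :
    sumMinTime n p μ ≤ ∑ j ∈ Icc 1 n, p (τ j) j :=
  sum_le_sum fun j hj => hμ j (mem_Icc.1 hj).1 (mem_Icc.1 hj).2 (τ j)

lemma sum_mload_eq (τ : ℕ → Fin m) : ∑ i, mload p τ i n = ∑ j ∈ Icc 1 n, p (τ j) j := by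
  simp only [mload]
  rw [sum_comm]
  simp

lemma sum_mload_le_card_mul_makespanM (τ : ℕ → Fin m) :
    ∑ i, mload p τ i n ≤ m * makespanM n p τ :=
  calc ∑ i, mload p τ i n ≤ ∑ _i : Fin m, makespanM n p τ :=
        sum_le_sum fun i _ => le_ciSup (f := (mload p τ · n)) (Set.finite_range _).bddAbove i
    _ = m * makespanM n p τ := by simp

lemma le_card_mul_OPTm [Nonempty (Fin m)] {x : ℝ} (h : ∀ τ, x ≤ m * makespanM n p τ) :
    x ≤ m * OPTm n p := by
  have hm : (0 : ℝ) < m := Nat.cast_pos.2 Fin.pos'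
  rw [← div_le_iff₀' hm]
  refine le_csInf ⟨_, fun _ => Classical.arbitrary _, rfl⟩ ?_
  rintro _ ⟨τ, rfl⟩
  exact (div_le_iff₀' hm).2 (h τ)

end SimpleMinded

open SimpleMinded

theorem spoa_simpleMinded_le_general (m n : ℕ)
    (p : Fin m → ℕ → ℝ) (hp : ∀ i j, 0 ≤ p i j)
    (μ σ : ℕ → Fin m) (hμ : MinSel n p μ) (hσ : SMEq n p μ σ) :
    makespanM n p σ ≤ (m : ℝ) * OPTm n p := by
  have : Nonempty (Fin m) := ⟨μ 0⟩
  calc makespanM n p σ ≤ sumMinTime n p μ := makespanM_le_sumMinTime hp hσ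
    _ ≤ m * OPTm n p := le_card_mul_OPTm fun τ =>
      calc sumMinTime n p μ ≤ ∑ j ∈ Icc 1 n, p (τ j) j := sumMinTime_le_sum hμ τ
        _ = ∑ i, mload p τ i n := (sum_mload_eq τ).symm
        _ ≤ m * makespanM n p τ := sum_mload_le_card_mul_makespanM τ

/-- On `m` unrelated machines with simple-minded players, every
simple-minded equilibrium has makespan at most `m · OPT`; in particular the
sequential price of anarchy for simple-minded players is at most `m`. -/
theorem spoa_simpleMinded_le (m n : ℕ) (hm : 0 < m)
    (p : Fin m → ℕ → ℝ) (hp : ∀ i j, 0 ≤ p i j)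
    (μ σ : ℕ → Fin m) (hμ : MinSel n p μ) (hσ : SMEq n p μ σ) :
    makespanM n p σ ≤ (m : ℝ) * OPTm n p :=
  spoa_simpleMinded_le_general m n p hp μ σ hμ hσ
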